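/- arXiv:0705.3215 — 3 statements merged into one kernel-verified Lean document; each statement's English description precedes it below -/
import Mathlib

section
/- Let S be a finite set of permutations generating a group H, and suppose S contains no element of the form s = g ∘ h with g ≠ 1, h ≠ 1 and g, h support-disjoint. If S is support-indecomposable as a set, then H is support-indecomposable as a group. -/
/-!
Suppose `H = ⟨S⟩` were `K ⊔ L` with `K`, `L` nontrivial and support-disjoint. Support-disjoint
permutations commute, so every element of `H`, in particular every `s ∈ S`, is a product `k * l`
with `k ∈ K`, `l ∈ L`; as `s` is not a product of two nontrivial support-disjoint permutations,
`s ∈ K` or `s ∈ L`. Both parts of the resulting partition of `S` are nonempty: if `S ⊆ L`, then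
`K ≤ H ≤ L`, and a permutation support-disjoint from itself is trivial.
-/

/-- A set of permutations is support-indecomposable if it cannot be partitioned
into two nonempty support-disjoint subsets. -/
def SetSuppIndecomposable {X : Type*} (S : Set (Equiv.Perm X)) : Prop :=
  ¬ ∃ S₁ S₂ : Set (Equiv.Perm X), S₁.Nonempty ∧ S₂.Nonempty ∧ S = S₁ ∪ S₂ ∧
    ∀ p ∈ S₁, ∀ q ∈ S₂, Disjoint {x | p x ≠ x} {x | q x ≠ x}

/-- A permutation group is support-indecomposable if it is not the internal direct
product of two support-disjoint nontrivial subgroups. -/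
def GroupSuppIndecomposable {X : Type*} (H : Subgroup (Equiv.Perm X)) : Prop :=
  ¬ ∃ K L : Subgroup (Equiv.Perm X), K ≠ ⊥ ∧ L ≠ ⊥ ∧
    (∀ k ∈ K, ∀ l ∈ L, Disjoint {x | k x ≠ x} {x | l x ≠ x}) ∧ K ⊔ L = H

open Equiv

theorem Equiv.Perm.disjoint_of_disjoint_setOf_ne {X : Type*} {f g : Perm X}
    (h : _root_.Disjoint {x | f x ≠ x} {x | g x ≠ x}) : f.Disjoint g := fun _ =>
  or_iff_not_imp_left.mpr fun hx => not_not.mp (Set.disjoint_left.mp h hx)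

namespace Subgroup

theorem exists_mul_eq_of_mem_sup_of_commute {G : Type*} [Group G] {K L : Subgroup G}
    (hKL : ∀ k ∈ K, ∀ l ∈ L, Commute k l) {g : G} (hg : g ∈ K ⊔ L) :
    ∃ k ∈ K, ∃ l ∈ L, k * l = g := by
  have hK : K ≤ centralizer (L : Set G) := fun k hk =>
    mem_centralizer_iff.mpr fun l hl => (hKL k hk l hl).symm.eq
  rw [← SetLike.mem_coe, coe_mul_of_left_le_normalizer_right K L
    (hK.trans (centralizer_le_normalizer _))] at hg
  exact hg

variable {X : Type*}

def SuppDisjoint (K L : Subgroup (Perm X)) : Prop :=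
  ∀ k ∈ K, ∀ l ∈ L, Disjoint {x | k x ≠ x} {x | l x ≠ x}

theorem SuppDisjoint.symm {K L : Subgroup (Perm X)} (h : SuppDisjoint K L) :
    SuppDisjoint L K :=
  fun l hl k hk => (h k hk l hl).symm

theorem SuppDisjoint.eq_bot_of_le {K L : Subgroup (Perm X)} (h : SuppDisjoint K L)
    (hKL : K ≤ L) : K = ⊥ :=
  (eq_bot_iff_forall K).mpr fun k hk =>
    Perm.ext fun x => (Perm.disjoint_of_disjoint_setOf_ne (h k hk k (hKL hk)) x).elim id id

theorem SuppDisjoint.mem_or_mem_of_mem_sup {K L : Subgroup (Perm X)} (h : SuppDisjoint K L)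
    {s : Perm X} (hs : s ∈ K ⊔ L)
    (hsplit : ¬ ∃ g k : Perm X, g ≠ 1 ∧ k ≠ 1 ∧ Disjoint {x | g x ≠ x} {x | k x ≠ x} ∧
      s = g * k) :
    s ∈ K ∨ s ∈ L := by
  obtain ⟨k, hk, l, hl, rfl⟩ := exists_mul_eq_of_mem_sup_of_commute
    (fun k hk l hl => (Perm.disjoint_of_disjoint_setOf_ne (h k hk l hl)).commute) hs
  by_cases hk1 : k = 1
  · exact .inr (by simpa [hk1] using hl)
  by_cases hl1 : l = 1
  · exact .inl (by simpa [hl1] using hk)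
  exact absurd ⟨k, l, hk1, hl1, h k hk l hl, rfl⟩ hsplit

theorem SuppDisjoint.exists_mem_left_of_closure_eq_sup {K L : Subgroup (Perm X)}
    (h : SuppDisjoint K L) (hK : K ≠ ⊥) {S : Set (Perm X)}
    (hS : closure S = K ⊔ L) (hSKL : ∀ s ∈ S, s ∈ K ∨ s ∈ L) :
    ∃ s ∈ S, s ∈ K := by
  by_contra! hSK
  have hSL : S ⊆ L := fun s hs => (hSKL s hs).resolve_left (hSK s hs)
  refine hK (h.eq_bot_of_le ?_)
  calc K ≤ K ⊔ L := le_sup_left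
    _ = closure S := hS.symm
    _ ≤ L := (closure_le L).mpr hSL

end Subgroup

theorem closure_suppIndecomposable_of_set_general {X : Type*} (S : Set (Equiv.Perm X))
    (H : Subgroup (Equiv.Perm X)) (hH : Subgroup.closure S = H)
    (hstar : ¬ ∃ s ∈ S, ∃ g h : Equiv.Perm X, g ≠ 1 ∧ h ≠ 1 ∧
      Disjoint {x | g x ≠ x} {x | h x ≠ x} ∧ s = g * h)
    (hSind : SetSuppIndecomposable S) :
    GroupSuppIndecomposable H := by
  rintro ⟨K, L, hK, hL, hKL, rfl⟩
  have hdisj : K.SuppDisjoint L := hKL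
  have hSKL : ∀ s ∈ S, s ∈ K ∨ s ∈ L := fun s hs =>
    hdisj.mem_or_mem_of_mem_sup (hH ▸ Subgroup.subset_closure hs) fun hsplit =>
      hstar ⟨s, hs, hsplit⟩
  obtain ⟨k, hkS, hkK⟩ := hdisj.exists_mem_left_of_closure_eq_sup hK hH hSKL
  obtain ⟨l, hlS, hlL⟩ := hdisj.symm.exists_mem_left_of_closure_eq_sup hL
    (hH.trans (sup_comm K L)) fun s hs => (hSKL s hs).symm
  refine hSind ⟨{s ∈ S | s ∈ K}, {s ∈ S | s ∈ L}, ⟨k, hkS, hkK⟩, ⟨l, hlS, hlL⟩, ?_, ?_⟩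
  · ext s
    simp only [Set.mem_union, Set.mem_ofPred_eq, ← and_or_left]
    exact ⟨fun hs => ⟨hs, hSKL s hs⟩, And.left⟩
  · exact fun p hp q hq => hdisj p hp.2 q hq.2

/-- If a finite set `S` of permutations contains no element that is a product of two
nontrivial support-disjoint permutations, and `S` is support-indecomposable as a
set, then the group `H` generated by `S` is support-indecomposable as a group. -/
theorem closure_suppIndecomposable_of_set {X : Type*} (S : Set (Equiv.Perm X))
    (hfin : S.Finite) (H : Subgroup (Equiv.Perm X)) (hH : Subgroup.closure S = H)
    (hstar : ¬ ∃ s ∈ S, ∃ g h : Equiv.Perm X, g ≠ 1 ∧ h ≠ 1 ∧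
      Disjoint {x | g x ≠ x} {x | h x ≠ x} ∧ s = g * h)
    (hSind : SetSuppIndecomposable S) :
    GroupSuppIndecomposable H :=
  closure_suppIndecomposable_of_set_general S H hH hstar hSind
end

section
/- If a permutation group H is support-indecomposable as a group, then any generating set S of H is support-indecomposable as a set (provided every element of S is nontrivial). -/
/-! Splitting `S = S₁ ∪ S₂` into support-disjoint nonempty parts splits `H = ⟨S⟩` as
`⟨S₁⟩ ⊔ ⟨S₂⟩`: a permutation whose support avoids `A` is one fixing `A` pointwise, and
these form a subgroup, so support-disjointness passes from generators to the generated
subgroups. Nontriviality of the generators makes both subgroups nontrivial. -/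

section

open Equiv

variable {X : Type*}

theorem disjoint_support_iff_mem_fixingSubgroup {p : Perm X} {A : Set X} :
    Disjoint {x | p x ≠ x} A ↔ p ∈ fixingSubgroup (Perm X) A := by
  simp only [mem_fixingSubgroup_iff, Perm.smul_def, Set.disjoint_left]
  exact ⟨fun h x hx => not_not.mp fun hpx => h hpx hx, fun h x hpx hx => hpx (h x hx)⟩

theorem disjoint_support_of_mem_closure {S : Set (Perm X)} {A : Set X}
    (hS : ∀ p ∈ S, Disjoint {x | p x ≠ x} A) {k : Perm X} (hk : k ∈ Subgroup.closure S) :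
    Disjoint {x | k x ≠ x} A := by
  have hle : Subgroup.closure S ≤ fixingSubgroup (Perm X) A :=
    (Subgroup.closure_le _).mpr fun p hp => disjoint_support_iff_mem_fixingSubgroup.mp (hS p hp)
  exact disjoint_support_iff_mem_fixingSubgroup.mpr (hle hk)

theorem disjoint_support_of_mem_closure_of_mem_closure {S₁ S₂ : Set (Perm X)}
    (hS : ∀ p ∈ S₁, ∀ q ∈ S₂, Disjoint {x | p x ≠ x} {x | q x ≠ x})
    {k l : Perm X} (hk : k ∈ Subgroup.closure S₁) (hl : l ∈ Subgroup.closure S₂) :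
    Disjoint {x | k x ≠ x} {x | l x ≠ x} :=
  (disjoint_support_of_mem_closure (fun q hq =>
    (disjoint_support_of_mem_closure (fun p hp => hS p hp q hq) hk).symm) hl).symm

end

/-- If a permutation group `H` is support-indecomposable as a group, then any
generating set `S` of `H` consisting of nontrivial elements is
support-indecomposable as a set. -/
theorem set_suppIndecomposable_of_group {X : Type*} (S : Set (Equiv.Perm X))
    (H : Subgroup (Equiv.Perm X)) (hH : Subgroup.closure S = H)
    (hnt : ∀ s ∈ S, s ≠ 1) (hHind : GroupSuppIndecomposable H) :
    SetSuppIndecomposable S := by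
  rintro ⟨S₁, S₂, ⟨p₁, hp₁⟩, ⟨p₂, hp₂⟩, rfl, hdisj⟩
  refine hHind ⟨Subgroup.closure S₁, Subgroup.closure S₂, ?_, ?_,
    fun k hk l hl => disjoint_support_of_mem_closure_of_mem_closure hdisj hk hl,
    by rw [← Subgroup.closure_union, hH]⟩
  · exact fun h => hnt p₁ (.inl hp₁) (Subgroup.closure_eq_bot_iff.mp h hp₁)
  · exact fun h => hnt p₂ (.inr hp₂) (Subgroup.closure_eq_bot_iff.mp h hp₂)
end

section
/- Let G be a group and suppose G has two internal direct product decompositions G = H₁ × ⋯ × Hₙ and G = K₁ × ⋯ × Kₘ, where the Hᵢ and Kⱼ are subgroups of a symmetric group Sym(X), factors within each decomposition are pairwise support-disjoint, and each factor is support-indecomposable and nontrivial. Then n = m and there exists a permutation σ of {1,…,n} such that Hᵢ = K_{σ(i)} for each i. -/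
open Equiv

lemma Subgroup.exists_mul_eq_of_mem_sup_of_commute_s12 {G : Type*} [Group G] {A B : Subgroup G}
    (hcomm : ∀ a ∈ A, ∀ b ∈ B, Commute a b) {g : G} (hg : g ∈ A ⊔ B) :
    ∃ a ∈ A, ∃ b ∈ B, a * b = g := by
  rw [← A.range_subtype, ← B.range_subtype,
    ← MonoidHom.noncommCoprod_range A.subtype B.subtype fun a b => hcomm a a.2 b b.2] at hg
  obtain ⟨⟨a, b⟩, rfl⟩ := hg
  exact ⟨a, a.2, b, b.2, rfl⟩

section SupportDisjoint

variable {X : Type*}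

def SuppDisjoint (A B : Subgroup (Perm X)) : Prop :=
  ∀ a ∈ A, ∀ b ∈ B, Disjoint {x | a x ≠ x} {x | b x ≠ x}

namespace SuppDisjoint

variable {A B : Subgroup (Perm X)}

lemma symm (h : SuppDisjoint A B) : SuppDisjoint B A :=
  fun b hb a ha => (h a ha b hb).symm

lemma apply_eq_of_apply_ne (h : SuppDisjoint A B) {a b : Perm X} (ha : a ∈ A) (hb : b ∈ B)
    {x : X} (hx : a x ≠ x) : b x = x :=
  not_not.mp (Set.disjoint_left.mp (h a ha b hb) hx)

lemma commute (h : SuppDisjoint A B) {a b : Perm X} (ha : a ∈ A) (hb : b ∈ B) :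
    Commute a b :=
  Perm.Disjoint.commute fun _ => or_iff_not_imp_left.mpr (h.apply_eq_of_apply_ne ha hb)

lemma iSup_right {ι : Sort*} {B : ι → Subgroup (Perm X)} (h : ∀ i, SuppDisjoint A (B i)) :
    SuppDisjoint A (⨆ i, B i) := by
  intro a ha b hb
  have hfix : ⨆ i, B i ≤ fixingSubgroup (Perm X) {x | a x ≠ x} :=
    iSup_le fun i _ hb => (mem_fixingSubgroup_iff _).mpr fun _ hx => (h i).apply_eq_of_apply_ne ha hb hx
  exact Set.disjoint_left.mpr fun x hx hbx => hbx ((mem_fixingSubgroup_iff _).mp (hfix hb) x hx)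

lemma mem_left_of_mem_sup (h : SuppDisjoint A B) {g : Perm X} (hg : g ∈ A ⊔ B)
    (hmoved : ∀ x, g x ≠ x → ∃ p ∈ A, p x ≠ x) : g ∈ A := by
  obtain ⟨a, ha, b, hb, rfl⟩ :=
    Subgroup.exists_mul_eq_of_mem_sup_of_commute_s12 (fun _ ha _ hb => h.commute ha hb) hg
  suffices b = 1 by rwa [this, mul_one]
  ext x
  by_contra hbx
  have hax : a x = x := h.symm.apply_eq_of_apply_ne hb ha hbx
  obtain ⟨p, hp, hpx⟩ := hmoved x (by rwa [(h.commute ha hb).eq, Perm.mul_apply, hax])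
  exact hbx (h.apply_eq_of_apply_ne hp hb hpx)

end SuppDisjoint

section Family

variable {ι κ : Type*} {H : ι → Subgroup (Perm X)} {K : κ → Subgroup (Perm X)}

lemma suppDisjoint_iSup_ne (hH : Pairwise fun i j => SuppDisjoint (H i) (H j)) (i : ι) :
    SuppDisjoint (H i) (⨆ (j) (_ : j ≠ i), H j) :=
  SuppDisjoint.iSup_right fun _ => SuppDisjoint.iSup_right fun hj => hH hj.symm

lemma mem_of_mem_iSup_of_moved (hH : Pairwise fun i j => SuppDisjoint (H i) (H j))
    {g : Perm X} (hg : g ∈ ⨆ j, H j) (i : ι) (hmoved : ∀ x, g x ≠ x → ∃ p ∈ H i, p x ≠ x) :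
    g ∈ H i :=
  (suppDisjoint_iSup_ne hH i).mem_left_of_mem_sup (by rwa [← iSup_split_single]) hmoved

lemma eq_inf_sup_inf_iSup_ne (hH : Pairwise fun i j => SuppDisjoint (H i) (H j))
    (hK : Pairwise fun i j => SuppDisjoint (K i) (K j)) (hHK : ⨆ i, H i = ⨆ j, K j)
    (i : ι) (j : κ) : H i = (H i ⊓ K j) ⊔ (H i ⊓ ⨆ (j') (_ : j' ≠ j), K j') := by
  refine le_antisymm (fun h hh => ?_) (sup_le inf_le_left inf_le_left)
  have hsplit := suppDisjoint_iSup_ne hK j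
  have hhK : h ∈ K j ⊔ ⨆ (j') (_ : j' ≠ j), K j' := by
    rw [← iSup_split_single, ← hHK]
    exact le_iSup H i hh
  obtain ⟨k, hk, b, hb, rfl⟩ :=
    Subgroup.exists_mul_eq_of_mem_sup_of_commute_s12 (fun _ hk _ hb => hsplit.commute hk hb) hhK
  have hkH : k ∈ H i :=
    mem_of_mem_iSup_of_moved hH (hHK ▸ le_iSup K j hk) i fun x hx =>
      ⟨k * b, hh, by rwa [Perm.mul_apply, hsplit.apply_eq_of_apply_ne hk hb hx]⟩
  have hbH : b ∈ H i := by simpa using mul_mem (inv_mem hkH) hh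
  exact Subgroup.mul_mem_sup ⟨hkH, hk⟩ ⟨hbH, hb⟩

lemma exists_le_of_suppIndecomposable (hH : Pairwise fun i j => SuppDisjoint (H i) (H j))
    (hK : Pairwise fun i j => SuppDisjoint (K i) (K j)) (hHK : ⨆ i, H i = ⨆ j, K j)
    (i : ι) (hnt : H i ≠ ⊥) (hind : GroupSuppIndecomposable (H i)) : ∃ j, H i ≤ K j := by
  obtain ⟨h, hh, hx⟩ : ∃ h ∈ H i, ∃ x, h x ≠ x := by
    obtain ⟨h, hh, h1⟩ := (Subgroup.bot_or_exists_ne_one _).resolve_left hnt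
    exact ⟨h, hh, not_forall.mp fun hfix => h1 (Perm.ext hfix)⟩
  obtain ⟨x, hx⟩ := hx
  obtain ⟨j, k, hk, hkx⟩ : ∃ j, ∃ k ∈ K j, k x ≠ x := by
    by_contra! hfix
    have hle : ⨆ j, K j ≤ fixingSubgroup (Perm X) {x} :=
      iSup_le fun j k hk => (mem_fixingSubgroup_iff _).mpr fun y hy => hy ▸ hfix j k hk
    exact hx ((mem_fixingSubgroup_iff _).mp (hle (hHK ▸ le_iSup H i hh)) x rfl)
  refine ⟨j, ?_⟩
  have hsplit := eq_inf_sup_inf_iSup_ne hH hK hHK i j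
  have hKj : H i ⊓ K j ≠ ⊥ := fun hbot => by
    have hhB : h ∈ H i ⊓ ⨆ (j') (_ : j' ≠ j), K j' := by simpa [hbot] using hsplit.le hh
    exact hx ((suppDisjoint_iSup_ne hK j).apply_eq_of_apply_ne hk hhB.2 hkx)
  have hrest : H i ⊓ ⨆ (j') (_ : j' ≠ j), K j' = ⊥ := by
    by_contra hrest
    exact hind ⟨_, _, hKj, hrest,
      fun a ha b hb => suppDisjoint_iSup_ne hK j a ha.2 b hb.2, hsplit.symm⟩
  rw [hrest, sup_bot_eq] at hsplit
  exact hsplit.le.trans inf_le_right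

lemma eq_of_le_of_pairwise_suppDisjoint (hH : Pairwise fun i j => SuppDisjoint (H i) (H j))
    {i i' : ι} (hnt : H i ≠ ⊥) (hle : H i ≤ H i') : i = i' := by
  by_contra hne
  refine hnt ((Subgroup.eq_bot_iff_forall _).mpr fun p hp => Perm.ext fun x => ?_)
  by_contra hx
  exact hx ((hH hne).apply_eq_of_apply_ne hp (hle hp) hx)

end Family

end SupportDisjoint

theorem geometric_decomposition_unique_general {X : Type*} {n m : ℕ}
    (G : Subgroup (Equiv.Perm X))
    (H : Fin n → Subgroup (Equiv.Perm X)) (K : Fin m → Subgroup (Equiv.Perm X))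
    (hHdisj : ∀ i j, i ≠ j → ∀ p ∈ H i, ∀ q ∈ H j,
      Disjoint {x | p x ≠ x} {x | q x ≠ x})
    (hKdisj : ∀ i j, i ≠ j → ∀ p ∈ K i, ∀ q ∈ K j,
      Disjoint {x | p x ≠ x} {x | q x ≠ x})
    (hHnt : ∀ i, H i ≠ ⊥) (hKnt : ∀ j, K j ≠ ⊥)
    (hHind : ∀ i, GroupSuppIndecomposable (H i))
    (hKind : ∀ j, GroupSuppIndecomposable (K j))
    (hHsup : ⨆ i, H i = G) (hKsup : ⨆ j, K j = G) :
    n = m ∧ ∃ e : Fin n ≃ Fin m, ∀ i, H i = K (e i) := by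
  have hH : Pairwise fun i j => SuppDisjoint (H i) (H j) := fun i j => hHdisj i j
  have hK : Pairwise fun i j => SuppDisjoint (K i) (K j) := fun i j => hKdisj i j
  have hHK : ⨆ i, H i = ⨆ j, K j := hHsup.trans hKsup.symm
  choose σ hσ using fun i => exists_le_of_suppIndecomposable hH hK hHK i (hHnt i) (hHind i)
  choose τ hτ using fun j => exists_le_of_suppIndecomposable hK hH hHK.symm j (hKnt j) (hKind j)
  have hτσ : ∀ i, τ (σ i) = i := fun i =>
    (eq_of_le_of_pairwise_suppDisjoint hH (hHnt i) ((hσ i).trans (hτ (σ i)))).symm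
  have hστ : ∀ j, σ (τ j) = j := fun j =>
    (eq_of_le_of_pairwise_suppDisjoint hK (hKnt j) ((hτ j).trans (hσ (τ j)))).symm
  let e : Fin n ≃ Fin m := ⟨σ, τ, hτσ, hστ⟩
  exact ⟨Fin.equiv_iff_eq.mp ⟨e⟩, e, fun i => (hσ i).antisymm (by simpa only [hτσ] using hτ (σ i))⟩

/-- Uniqueness of the geometric decomposition: two decompositions of a permutation
group `G` into pairwise support-disjoint, support-indecomposable, nontrivial factors
agree up to a permutation of the factors. -/
theorem geometric_decomposition_unique {X : Type*} [Fintype X] {n m : ℕ}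
    (G : Subgroup (Equiv.Perm X))
    (H : Fin n → Subgroup (Equiv.Perm X)) (K : Fin m → Subgroup (Equiv.Perm X))
    (hHdisj : ∀ i j, i ≠ j → ∀ p ∈ H i, ∀ q ∈ H j,
      Disjoint {x | p x ≠ x} {x | q x ≠ x})
    (hKdisj : ∀ i j, i ≠ j → ∀ p ∈ K i, ∀ q ∈ K j,
      Disjoint {x | p x ≠ x} {x | q x ≠ x})
    (hHnt : ∀ i, H i ≠ ⊥) (hKnt : ∀ j, K j ≠ ⊥)
    (hHind : ∀ i, GroupSuppIndecomposable (H i))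
    (hKind : ∀ j, GroupSuppIndecomposable (K j))
    (hHsup : ⨆ i, H i = G) (hKsup : ⨆ j, K j = G) :
    n = m ∧ ∃ e : Fin n ≃ Fin m, ∀ i, H i = K (e i) :=
  geometric_decomposition_unique_general G H K hHdisj hKdisj hHnt hKnt hHind hKind hHsup hKsup
end
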